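/- arXiv:0906.1178 — 2 statements merged into one kernel-verified Lean document; each statement's English description precedes it below -/
import Mathlib

section
/- There is no finite subgroup of O(3) with two distinct 6-fold axes of rotation. Precisely: if G is a finite subgroup of O(3) and g, h ∈ G are rotations of order 6, then g and h have the same rotation axis, i.e., {x ∈ ℝ³ : gx = x} = {x ∈ ℝ³ : hx = x}. -/
/-!
A rotation `k` of order 6 about a unit vector `v` turns the plane `vᗮ` by `±π/3`, so
`⟪k w, w⟫ = (‖w‖² + ⟪v, w⟫²) / 2` for every `w`. The unit vectors on sixfold axes of `G` form a
finite set `S`, permuted by `G`. If `S` contained two non-parallel vectors, choose such a pair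
`v, w` with `c = ⟪v, w⟫` maximal and let `k ∈ G` be a sixfold rotation about `v`: then `w` and
`k w` are non-parallel vectors of `S` with `⟪w, k w⟫ = (1 + c²) / 2 > c`.
-/

noncomputable section

abbrev E3 : Type := EuclideanSpace ℝ (Fin 3)

open Module Real
open scoped RealInnerProductSpace Matrix

theorem Matrix.det_sub_one_eq_zero_of_mem_specialOrthogonalGroup {n : Type*} [Fintype n]
    [DecidableEq n] (hn : Odd (Fintype.card n)) {M : Matrix n n ℝ}
    (hM : M ∈ Matrix.specialOrthogonalGroup n ℝ) : (M - 1).det = 0 := by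
  obtain ⟨horth, hdet⟩ := Matrix.mem_specialOrthogonalGroup_iff.mp hM
  have hMtM : Mᵀ * M = 1 := (Matrix.mem_orthogonalGroup_iff' n ℝ).mp horth
  have : (M - 1).det = -(M - 1).det :=
    calc (M - 1).det = (Mᵀ * (1 - M)).det := by
          rw [← Matrix.det_transpose, Matrix.mul_sub, hMtM, Matrix.mul_one, Matrix.transpose_sub,
            Matrix.transpose_one]
      _ = (-(M - 1)).det := by rw [Matrix.det_mul, Matrix.det_transpose, hdet, one_mul, neg_sub]
      _ = -(M - 1).det := by rw [Matrix.det_neg, hn.neg_one_pow, neg_one_mul]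
  linarith

variable {V : Type*} [NormedAddCommGroup V] [InnerProductSpace ℝ V]

theorem LinearIsometryEquiv.exists_norm_eq_one_apply_eq_self [FiniteDimensional ℝ V]
    (hV : Odd (finrank ℝ V)) (f : V ≃ₗᵢ[ℝ] V) (hf : LinearEquiv.det f.toLinearEquiv = 1) :
    ∃ u : V, ‖u‖ = 1 ∧ f u = u := by
  let b := (stdOrthonormalBasis ℝ V).toBasis
  let A : V →ₗ[ℝ] V := f.toLinearEquiv
  have hM : LinearMap.toMatrix b b A ∈ Matrix.specialOrthogonalGroup _ ℝ := by
    refine Matrix.mem_specialOrthogonalGroup_iff.mpr ⟨f.toMatrix_mem_unitaryGroup _ _, ?_⟩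
    rw [LinearMap.det_toMatrix, ← LinearEquiv.coe_det, hf, Units.val_one]
  have hdet : LinearMap.det (A - LinearMap.id) = 0 := by
    rw [← LinearMap.det_toMatrix b, _root_.map_sub, LinearMap.toMatrix_id]
    exact Matrix.det_sub_one_eq_zero_of_mem_specialOrthogonalGroup (by simpa using hV) hM
  obtain ⟨v, hv, hv0⟩ := (Submodule.ne_bot_iff _).mp (LinearMap.bot_lt_ker_of_det_eq_zero hdet).ne'
  have hfv : f v = v := sub_eq_zero.mp hv
  refine ⟨‖v‖⁻¹ • v, norm_smul_inv_norm hv0, ?_⟩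
  rw [map_smul, hfv]

theorem mem_span_singleton_of_inner_sq_eq {u x : V} (hu : ‖u‖ = 1) (h : ⟪u, x⟫ ^ 2 = ‖x‖ ^ 2) :
    x ∈ ℝ ∙ u := by
  have : ‖x - ⟪u, x⟫ • u‖ ^ 2 = 0 := by
    rw [norm_sub_sq_real, real_inner_smul_right, norm_smul, hu, real_inner_comm u x,
      Real.norm_eq_abs, mul_one, sq_abs]
    linear_combination -h
  exact Submodule.mem_span_singleton.mpr ⟨_, (sub_eq_zero.mp (by simpa using this)).symm⟩

theorem span_singleton_eq_of_abs_inner_eq_one {u v : V} (hu : ‖u‖ = 1) (hv : ‖v‖ = 1)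
    (h : |⟪u, v⟫| = 1) : ℝ ∙ u = ℝ ∙ v := by
  have h2 : ⟪u, v⟫ ^ 2 = 1 := by rw [← sq_abs, h, one_pow]
  apply le_antisymm <;> rw [Submodule.span_singleton_le_iff_mem] <;>
    apply mem_span_singleton_of_inner_sq_eq <;> simp [real_inner_comm, h2, hu, hv]

theorem finite_setOf_norm_eq_one_mem_span_singleton {u : V} (hu : ‖u‖ = 1) :
    {v : V | ‖v‖ = 1 ∧ v ∈ ℝ ∙ u}.Finite := by
  refine (Set.toFinite {u, -u}).subset ?_
  rintro v ⟨hv, hvu⟩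
  obtain ⟨a, rfl⟩ := Submodule.mem_span_singleton.mp hvu
  rw [norm_smul, hu, mul_one, Real.norm_eq_abs] at hv
  rcases (abs_eq zero_le_one).mp hv with rfl | rfl <;> simp

namespace Orientation

variable [Fact (finrank ℝ V = 2)] (o : Orientation ℝ V (Fin 2))

def rotationHom : Multiplicative Real.Angle →* (V ≃ₗᵢ[ℝ] V) where
  toFun θ := o.rotation θ.toAdd
  map_one' := o.rotation_zero
  map_mul' θ₁ θ₂ := by
    ext x
    exact (o.rotation_rotation θ₁.toAdd θ₂.toAdd x).symm

theorem rotationHom_injective : Function.Injective o.rotationHom := by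
  have : Nontrivial V := nontrivial_of_finrank_eq_succ (Fact.out : finrank ℝ V = 2)
  obtain ⟨x, hx⟩ := exists_ne (0 : V)
  refine (injective_iff_map_eq_one _).mpr fun θ hθ => ?_
  exact ((o.rotation_eq_self_iff x θ.toAdd).mp congr($hθ x)).resolve_left hx

theorem orderOf_rotation (θ : Real.Angle) : orderOf (o.rotation θ) = addOrderOf θ :=
  (orderOf_injective _ o.rotationHom_injective (Multiplicative.ofAdd θ)).trans
    (orderOf_ofAdd_eq_addOrderOf θ)

theorem inner_rotation_self (θ : Real.Angle) (x : V) :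
    ⟪o.rotation θ x, x⟫ = θ.cos * ‖x‖ ^ 2 := by
  rw [o.rotation_apply, inner_add_left, real_inner_smul_left, real_inner_smul_left,
    o.inner_rightAngleRotation_self, mul_zero, add_zero, real_inner_self_eq_norm_sq]

end Orientation

theorem Real.Angle.cos_eq_half_of_addOrderOf_eq_six {θ : Real.Angle} (h : addOrderOf θ = 6) :
    θ.cos = 1 / 2 := by
  have : Fact (0 < 2 * π) := ⟨Real.two_pi_pos⟩
  obtain ⟨m, hm, hcop, hθ⟩ := (AddCircle.addOrderOf_eq_pos_iff (by norm_num)).mp h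
  rw [← show ((m / 6 * (2 * π) : ℝ) : Real.Angle) = θ from hθ, Real.Angle.cos_coe]
  interval_cases m <;> norm_num at hcop
  · convert Real.cos_pi_div_three using 2
    push_cast; ring
  · convert Real.cos_pi_div_three using 1
    rw [show ((5 : ℕ) : ℝ) / 6 * (2 * π) = -(π / 3) + (1 : ℕ) * (2 * π) by push_cast; ring,
      Real.cos_add_nat_mul_two_pi, Real.cos_neg]

theorem LinearIsometryEquiv.inner_apply_self_of_orderOf_eq_six (hV : finrank ℝ V = 2)
    {r : V ≃ₗᵢ[ℝ] V} (hdet : 0 < LinearMap.det (r.toLinearEquiv : V →ₗ[ℝ] V))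
    (hr : orderOf r = 6) (x : V) : ⟪r x, x⟫ = ‖x‖ ^ 2 / 2 := by
  have : Fact (finrank ℝ V = 2) := ⟨hV⟩
  have : Module.Finite ℝ V := Module.finite_of_finrank_eq_succ hV
  let o : Orientation ℝ V (Fin 2) := (Module.finBasisOfFinrankEq ℝ V hV).orientation
  obtain ⟨θ, rfl⟩ := o.exists_linearIsometryEquiv_eq_of_det_pos hdet
  rw [o.orderOf_rotation] at hr
  rw [o.inner_rotation_self, Real.Angle.cos_eq_half_of_addOrderOf_eq_six hr]
  ring

namespace LinearIsometryEquiv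

variable (u : V)

def stabilizer : Subgroup (V ≃ₗᵢ[ℝ] V) where
  carrier := {f | f u = u}
  mul_mem' {f g} (hf : f u = u) (hg : g u = u) := show f (g u) = u by rw [hg, hf]
  one_mem' := rfl
  inv_mem' {f} (hf : f u = u) := show f.symm u = u from f.symm_apply_eq.mpr hf.symm

variable {u}

theorem map_orthogonal_span_singleton {f : V ≃ₗᵢ[ℝ] V} (hfu : f u = u) :
    (ℝ ∙ u)ᗮ.map (f.toLinearEquiv : V →ₗ[ℝ] V) = (ℝ ∙ u)ᗮ := by
  rw [Submodule.map_orthogonal_equiv, Submodule.map_span, Set.image_singleton]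
  simp [hfu]

def restrictOrthogonal (u : V) :
    stabilizer u →* ((ℝ ∙ u)ᗮ ≃ₗᵢ[ℝ] (ℝ ∙ u)ᗮ) where
  toFun f := (f.1.submoduleMap _).trans (ofEq _ _ (map_orthogonal_span_singleton f.2))
  map_one' := rfl
  map_mul' _ _ := rfl

theorem restrictOrthogonal_injective : Function.Injective (restrictOrthogonal u) := by
  refine (injective_iff_map_eq_one _).mpr fun f h => Subtype.ext <| ext fun x => ?_
  obtain ⟨y, hy, z, hz, rfl⟩ := (ℝ ∙ u).exists_add_mem_mem_orthogonal x
  obtain ⟨a, rfl⟩ := Submodule.mem_span_singleton.mp hy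
  have hfu : f.1 u = u := f.2
  have hfz : f.1 z = z := congr(($h ⟨z, hz⟩ : V))
  simp [hfu, hfz]

theorem orderOf_restrictOrthogonal (f : stabilizer u) :
    orderOf (restrictOrthogonal u f) = orderOf f.1 :=
  (orderOf_injective _ restrictOrthogonal_injective f).trans (Subgroup.orderOf_coe f).symm

theorem det_restrictOrthogonal [FiniteDimensional ℝ V] (f : stabilizer u) :
    LinearMap.det ((restrictOrthogonal u f).toLinearEquiv : (ℝ ∙ u)ᗮ →ₗ[ℝ] (ℝ ∙ u)ᗮ) =
      LinearMap.det (f.1.toLinearEquiv : V →ₗ[ℝ] V) := by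
  have hP : (ℝ ∙ u)ᗮ ≤ (ℝ ∙ u)ᗮ.comap (f.1.toLinearEquiv : V →ₗ[ℝ] V) := fun x hx =>
    (restrictOrthogonal u f ⟨x, hx⟩).2
  have hQ : (ℝ ∙ u)ᗮ.mapQ _ _ hP = LinearMap.id := by
    refine Submodule.linearMap_qext _ (LinearMap.ext fun x => ?_)
    simp only [LinearMap.coe_comp, Function.comp_apply, Submodule.mkQ_apply, Submodule.mapQ_apply,
      LinearMap.id_apply, Submodule.Quotient.eq, Submodule.mem_orthogonal_singleton_iff_inner_right]
    have hfu : f.1 u = u := f.2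
    rw [inner_sub_right, sub_eq_zero, ← f.1.inner_map_map u x, hfu]
    rfl
  rw [LinearMap.det_eq_det_mul_det _ _ hP, hQ, LinearMap.det_id, mul_one]
  rfl

end LinearIsometryEquiv

section ThreeDim

open LinearIsometryEquiv

variable (hV : finrank ℝ V = 3) {f : V ≃ₗᵢ[ℝ] V} (hdet : LinearEquiv.det f.toLinearEquiv = 1)
  (hord : orderOf f = 6) {u : V}
include hV hdet hord

theorem inner_apply_self_of_inner_eq_zero (hu : u ≠ 0) (hfu : f u = u) {w : V} (hw : ⟪u, w⟫ = 0) :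
    ⟪f w, w⟫ = ‖w‖ ^ 2 / 2 := by
  have : Fact (finrank ℝ V = 2 + 1) := ⟨hV⟩
  have : FiniteDimensional ℝ V := Module.finite_of_finrank_eq_succ hV
  let f' : stabilizer u := ⟨f, hfu⟩
  have hdet' : 0 < LinearMap.det ((restrictOrthogonal u f').toLinearEquiv :
      (ℝ ∙ u)ᗮ →ₗ[ℝ] (ℝ ∙ u)ᗮ) := by
    rw [det_restrictOrthogonal, ← LinearEquiv.coe_det, hdet, Units.val_one]
    exact one_pos
  exact inner_apply_self_of_orderOf_eq_six (Submodule.finrank_orthogonal_span_singleton hu)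
    hdet' ((orderOf_restrictOrthogonal f').trans hord)
    ⟨w, Submodule.mem_orthogonal_singleton_iff_inner_right.mpr hw⟩

theorem inner_apply_self_eq (hu : ‖u‖ = 1) (hfu : f u = u) (w : V) :
    ⟪f w, w⟫ = (‖w‖ ^ 2 + ⟪u, w⟫ ^ 2) / 2 := by
  have : FiniteDimensional ℝ V := Module.finite_of_finrank_eq_succ hV
  obtain ⟨y, hy, z, hz, rfl⟩ := (ℝ ∙ u).exists_add_mem_mem_orthogonal w
  obtain ⟨a, rfl⟩ := Submodule.mem_span_singleton.mp hy
  have huz : ⟪u, z⟫ = 0 := Submodule.mem_orthogonal_singleton_iff_inner_right.mp hz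
  have hfzu : ⟪f z, u⟫ = 0 := by rw [← hfu, f.inner_map_map, real_inner_comm, huz]
  have huu : ⟪u, u⟫ = 1 := by rw [real_inner_self_eq_norm_sq, hu, one_pow]
  have hfz := inner_apply_self_of_inner_eq_zero hV hdet hord (by rintro rfl; simp at hu) hfu huz
  have hpyth : ‖a • u + z‖ ^ 2 = a ^ 2 + ‖z‖ ^ 2 := by
    rw [norm_add_sq_real, real_inner_smul_left, huz, norm_smul, hu, mul_one, Real.norm_eq_abs,
      sq_abs]
    ring
  rw [f.map_add, f.map_smul, hfu, hpyth]
  simp only [inner_add_left, inner_add_right, real_inner_smul_left, real_inner_smul_right, huu,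
    huz, hfzu, hfz]
  ring

theorem setOf_apply_eq_self_eq_span (hu : ‖u‖ = 1) (hfu : f u = u) :
    {x | f x = x} = (ℝ ∙ u : Set V) := by
  ext x
  refine ⟨fun (hx : f x = x) => mem_span_singleton_of_inner_sq_eq hu ?_, fun hx => ?_⟩
  · have := inner_apply_self_eq hV hdet hord hu hfu x
    rw [hx, real_inner_self_eq_norm_sq] at this
    linarith
  · obtain ⟨a, rfl⟩ := Submodule.mem_span_singleton.mp hx
    show f (a • u) = a • u
    rw [f.map_smul, hfu]

theorem finite_setOf_norm_eq_one_apply_eq_self :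
    {v : V | ‖v‖ = 1 ∧ f v = v}.Finite := by
  have : FiniteDimensional ℝ V := Module.finite_of_finrank_eq_succ hV
  obtain ⟨u, hu, hfu⟩ := f.exists_norm_eq_one_apply_eq_self (by rw [hV]; decide) hdet
  refine (finite_setOf_norm_eq_one_mem_span_singleton hu).subset fun v ⟨hv, hfv⟩ => ⟨hv, ?_⟩
  rw [← SetLike.mem_coe, ← setOf_apply_eq_self_eq_span hV hdet hord hu hfu]
  exact hfv

end ThreeDim

theorem abs_inner_eq_one_of_forall_exists_inner_eq {S : Set V} (hS : S.Finite)
    (hunit : ∀ v ∈ S, ‖v‖ = 1)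
    (hstep : ∀ v ∈ S, ∀ w ∈ S, ∃ w' ∈ S, ⟪w, w'⟫ = (1 + ⟪v, w⟫ ^ 2) / 2) {v w : V} (hv : v ∈ S)
    (hw : w ∈ S) : |⟪v, w⟫| = 1 := by
  by_contra hvw
  let T := {p : V × V | p.1 ∈ S ∧ p.2 ∈ S ∧ |⟪p.1, p.2⟫| < 1}
  have hT : T.Finite := (hS.prod hS).subset fun p hp => ⟨hp.1, hp.2.1⟩
  have hvwT : (v, w) ∈ T := ⟨hv, hw, lt_of_le_of_ne
    (by simpa [hunit v hv, hunit w hw] using abs_real_inner_le_norm v w) hvw⟩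
  obtain ⟨⟨v₀, w₀⟩, ⟨hv₀, hw₀, hc⟩, hmax⟩ := T.exists_max_image (fun p => ⟪p.1, p.2⟫) hT ⟨_, hvwT⟩
  obtain ⟨w', hw', hww'⟩ := hstep v₀ hv₀ w₀ hw₀
  obtain ⟨hc₁, hc₂⟩ := abs_lt.mp hc
  have hw'T : (w₀, w') ∈ T := ⟨hw₀, hw', by rw [hww', abs_lt]; constructor <;> nlinarith⟩
  have hle : (1 + ⟪v₀, w₀⟫ ^ 2) / 2 ≤ ⟪v₀, w₀⟫ := hww' ▸ hmax _ hw'T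
  nlinarith

def sixfoldAxisUnits (G : Subgroup (V ≃ₗᵢ[ℝ] V)) : Set V :=
  {v | ‖v‖ = 1 ∧ ∃ k ∈ G, LinearEquiv.det k.toLinearEquiv = 1 ∧ orderOf k = 6 ∧ k v = v}

theorem apply_mem_sixfoldAxisUnits {G : Subgroup (V ≃ₗᵢ[ℝ] V)} {k : V ≃ₗᵢ[ℝ] V} (hk : k ∈ G)
    {w : V} (hw : w ∈ sixfoldAxisUnits G) : k w ∈ sixfoldAxisUnits G := by
  obtain ⟨hw₁, m, hmG, hm, hm₆, hmw⟩ := hw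
  refine ⟨by rw [k.norm_map, hw₁], k * m * k⁻¹, G.mul_mem (G.mul_mem hk hmG) (G.inv_mem hk),
    (LinearEquiv.det_conj m.toLinearEquiv k.toLinearEquiv).trans hm,
    ((MulAut.conj k).orderOf_eq m).trans hm₆, ?_⟩
  simp [hmw]

theorem finite_sixfoldAxisUnits (hV : finrank ℝ V = 3) (G : Subgroup (V ≃ₗᵢ[ℝ] V)) [Finite G] :
    (sixfoldAxisUnits G).Finite := by
  let R := {k | k ∈ G ∧ LinearEquiv.det k.toLinearEquiv = 1 ∧ orderOf k = 6}
  have hR : R.Finite := (G : Set (V ≃ₗᵢ[ℝ] V)).toFinite.subset fun k hk => hk.1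
  refine (hR.biUnion fun k hk => finite_setOf_norm_eq_one_apply_eq_self hV hk.2.1 hk.2.2).subset ?_
  rintro v ⟨hv, k, hkG, hk, hk₆, hkv⟩
  exact Set.mem_biUnion ⟨hkG, hk, hk₆⟩ ⟨hv, hkv⟩

theorem exists_inner_eq_of_mem_sixfoldAxisUnits (hV : finrank ℝ V = 3)
    {G : Subgroup (V ≃ₗᵢ[ℝ] V)} {v w : V} (hv : v ∈ sixfoldAxisUnits G)
    (hw : w ∈ sixfoldAxisUnits G) :
    ∃ w' ∈ sixfoldAxisUnits G, ⟪w, w'⟫ = (1 + ⟪v, w⟫ ^ 2) / 2 := by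
  obtain ⟨hv₁, k, hkG, hk, hk₆, hkv⟩ := hv
  refine ⟨k w, apply_mem_sixfoldAxisUnits hkG hw, ?_⟩
  rw [real_inner_comm, inner_apply_self_eq hV hk hk₆ hv₁ hkv, hw.1, one_pow]

theorem no_two_sixfold_axes
    (G : Subgroup (E3 ≃ₗᵢ[ℝ] E3)) (hG : Finite G)
    (g h : E3 ≃ₗᵢ[ℝ] E3) (hgG : g ∈ G) (hhG : h ∈ G)
    (hgdet : LinearEquiv.det g.toLinearEquiv = 1) (hgord : orderOf g = 6)
    (hhdet : LinearEquiv.det h.toLinearEquiv = 1) (hhord : orderOf h = 6) :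
    {x : E3 | g x = x} = {x : E3 | h x = x} := by
  have hV : finrank ℝ E3 = 3 := finrank_euclideanSpace_fin
  have hodd : Odd (finrank ℝ E3) := by rw [hV]; decide
  obtain ⟨ug, hug, hgug⟩ := g.exists_norm_eq_one_apply_eq_self hodd hgdet
  obtain ⟨uh, huh, hhuh⟩ := h.exists_norm_eq_one_apply_eq_self hodd hhdet
  have hparallel : |⟪ug, uh⟫| = 1 :=
    abs_inner_eq_one_of_forall_exists_inner_eq (finite_sixfoldAxisUnits hV G) (fun _ hv => hv.1)
      (fun _ hv _ hw => exists_inner_eq_of_mem_sixfoldAxisUnits hV hv hw)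
      ⟨hug, g, hgG, hgdet, hgord, hgug⟩ ⟨huh, h, hhG, hhdet, hhord, hhuh⟩
  rw [setOf_apply_eq_self_eq_span hV hgdet hgord hug hgug,
    setOf_apply_eq_self_eq_span hV hhdet hhord huh hhuh,
    span_singleton_eq_of_abs_inner_eq_one hug huh hparallel]
end
end

section
/- Fix a real number a ≠ 0 and let G be the subgroup of isometries of ℝ³ generated by the three maps R₀(x,y,z) = (y + a, x − a, −z + a), R₁(x,y,z) = (x, −y, z), S(x,y,z) = (−y, −z, x). Then the orbit of the origin under G (the vertex set of the regular complex K₂(1,2)) equals the body-centered cubic lattice aΛ_{(1,1,1)} = {(am₁, am₂, am₃) : m₁, m₂, m₃ ∈ ℤ with m₁ ≡ m₂ ≡ m₃ (mod 2)}. -/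
/-! Each generator maps `aΛ_{(1,1,1)}` into itself and has finite order (`R₀`, `R₁` are
involutions and `S³ = 1`), so the whole group preserves the lattice, which contains the origin.
Conversely, the words `R₀R₁R₀SR₁S²`, `(R₁R₀S)²` and `SR₀R₁R₀SR₁S` are the translations by `2a`
along the three axes, so the orbit contains `2aℤ³` and its translate by `R₀(0) = (a, -a, a)`;
these two cosets make up `aΛ_{(1,1,1)}`. -/

noncomputable section

def pt (x y z : ℝ) : E3 := WithLp.toLp 2 ![x, y, z]

open Set

section IsometryGroup

variable {α : Type*} [PseudoEMetricSpace α]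

theorem IsometryEquiv.coe_pow (g : α ≃ᵢ α) (n : ℕ) : ⇑(g ^ n) = (⇑g)^[n] := by
  induction n with
  | zero => rfl
  | succ n ih => rw [pow_succ, coe_mul, ih, Function.iterate_succ]

theorem IsometryEquiv.isOfFinOrder_of_iterate_eq_id {g : α ≃ᵢ α} {n : ℕ} (hn : 0 < n)
    (h : (⇑g)^[n] = id) : IsOfFinOrder g :=
  isOfFinOrder_iff_pow_eq_one.2 ⟨n, hn, IsometryEquiv.ext fun x => by rw [coe_pow, h]; rfl⟩

theorem IsometryEquiv.mapsTo_of_mem_closure {s : Set (α ≃ᵢ α)} {L : Set α}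
    (hfin : ∀ g ∈ s, IsOfFinOrder g) (hL : ∀ g ∈ s, MapsTo g L L) {g : α ≃ᵢ α}
    (hg : g ∈ Subgroup.closure s) : MapsTo g L L := by
  rw [← Subgroup.mem_toSubmonoid, Subgroup.closure_toSubmonoid_of_isOfFinOrder hfin] at hg
  induction hg using Submonoid.closure_induction with
  | mem g hg => exact hL g hg
  | one => exact mapsTo_id L
  | mul g h _ _ hg hh => exact hg.comp hh

variable [AddCommGroup α]

theorem IsometryEquiv.zpow_apply_of_forall_apply_eq_add {t : α ≃ᵢ α} {v : α}
    (ht : ∀ p, t p = p + v) (k : ℤ) (p : α) : (t ^ k) p = p + k • v := by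
  have ht_inv : ∀ p, t⁻¹ p = p - v := fun p => by
    rw [← t.inv_apply_self (p - v), ht, sub_add_cancel]
  induction k using Int.induction_on generalizing p with
  | zero => simp
  | succ k ih => rw [zpow_add_one, mul_apply, ih, ht, add_zsmul, one_zsmul]; abel
  | pred k ih => rw [zpow_sub_one, mul_apply, ih, ht_inv, sub_zsmul, one_zsmul]; abel

theorem IsometryEquiv.exists_mem_apply_eq_add_zsmul {K : Subgroup (α ≃ᵢ α)} {t : α ≃ᵢ α}
    {v : α} (htK : t ∈ K) (ht : ∀ p, t p = p + v) {x y : α} (hy : ∃ g ∈ K, g x = y)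
    (k : ℤ) : ∃ g ∈ K, g x = y + k • v := by
  obtain ⟨g, hg, rfl⟩ := hy
  exact ⟨t ^ k * g, mul_mem (zpow_mem htK k) hg, zpow_apply_of_forall_apply_eq_add ht k _⟩

end IsometryGroup

@[simp] lemma pt_apply_zero (x y z : ℝ) : pt x y z 0 = x := rfl
@[simp] lemma pt_apply_one (x y z : ℝ) : pt x y z 1 = y := rfl
@[simp] lemma pt_apply_two (x y z : ℝ) : pt x y z 2 = z := rfl

lemma pt_zero : pt 0 0 0 = 0 := by
  ext i; fin_cases i <;> rfl

def bccLattice (a : ℝ) : Set E3 :=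
  {y | ∃ m1 m2 m3 : ℤ, y 0 = a * m1 ∧ y 1 = a * m2 ∧ y 2 = a * m3 ∧
    Int.ModEq 2 m1 m2 ∧ Int.ModEq 2 m2 m3}

def genR0 (a : ℝ) (x : E3) : E3 := pt (x 1 + a) (x 0 - a) (-(x 2) + a)

def genR1 (x : E3) : E3 := pt (x 0) (-(x 1)) (x 2)

def genS (x : E3) : E3 := pt (-(x 1)) (-(x 2)) (x 0)

lemma zero_mem_bccLattice (a : ℝ) : (0 : E3) ∈ bccLattice a :=
  ⟨0, 0, 0, by simp, by simp, by simp, rfl, rfl⟩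

lemma mapsTo_genR0_bccLattice (a : ℝ) : MapsTo (genR0 a) (bccLattice a) (bccLattice a) := by
  rintro y ⟨m1, m2, m3, h1, h2, h3, h12, h23⟩
  refine ⟨m2 + 1, m1 - 1, 1 - m3, ?_, ?_, ?_, ?_, ?_⟩
  all_goals simp only [genR0, pt_apply_zero, pt_apply_one, pt_apply_two, h1, h2, h3, Int.ModEq,
    Int.cast_add, Int.cast_sub, Int.cast_one] at h12 h23 ⊢
  all_goals first | omega | ring

lemma mapsTo_genR1_bccLattice (a : ℝ) : MapsTo genR1 (bccLattice a) (bccLattice a) := by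
  rintro y ⟨m1, m2, m3, h1, h2, h3, h12, h23⟩
  refine ⟨m1, -m2, m3, ?_, ?_, ?_, ?_, ?_⟩
  all_goals simp only [genR1, pt_apply_zero, pt_apply_one, pt_apply_two, h1, h2, h3, Int.ModEq,
    Int.cast_neg] at h12 h23 ⊢
  all_goals first | omega | ring

lemma mapsTo_genS_bccLattice (a : ℝ) : MapsTo genS (bccLattice a) (bccLattice a) := by
  rintro y ⟨m1, m2, m3, h1, h2, h3, h12, h23⟩
  refine ⟨-m2, -m3, m1, ?_, ?_, ?_, ?_, ?_⟩
  all_goals simp only [genS, pt_apply_zero, pt_apply_one, pt_apply_two, h1, h2, h3, Int.ModEq,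
    Int.cast_neg] at h12 h23 ⊢
  all_goals first | omega | ring

lemma genR0_iterate_two (a : ℝ) : (genR0 a)^[2] = id := by
  funext x; ext i; fin_cases i <;> simp [genR0]

lemma genR1_iterate_two : genR1^[2] = id := by
  funext x; ext i; fin_cases i <;> simp [genR1]

lemma genS_iterate_three : genS^[3] = id := by
  funext x; ext i; fin_cases i <;> simp [genS]

lemma genR0_zero (a : ℝ) : genR0 a 0 = pt a (-a) a := by
  simp [genR0]

lemma genR0_genR1_genR0_genS_genR1_genS_genS (a : ℝ) (p : E3) :
    genR0 a (genR1 (genR0 a (genS (genR1 (genS (genS p)))))) = p + pt (2 * a) 0 0 := by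
  ext i; fin_cases i <;> simp [genR0, genR1, genS]
  ring

lemma genR1_genR0_genS_genR1_genR0_genS (a : ℝ) (p : E3) :
    genR1 (genR0 a (genS (genR1 (genR0 a (genS p))))) = p + pt 0 (2 * a) 0 := by
  ext i; fin_cases i <;> simp [genR0, genR1, genS]
  ring

lemma genS_genR0_genR1_genR0_genS_genR1_genS (a : ℝ) (p : E3) :
    genS (genR0 a (genR1 (genR0 a (genS (genR1 (genS p)))))) = p + pt 0 0 (2 * a) := by
  ext i; fin_cases i <;> simp [genR0, genR1, genS]
  ring

lemma bccLattice_subset_orbit {a : ℝ} {K : Subgroup (E3 ≃ᵢ E3)}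
    (hbase : ∃ g ∈ K, g 0 = pt a (-a) a)
    (hx : ∃ t ∈ K, ∀ p, t p = p + pt (2 * a) 0 0)
    (hy : ∃ t ∈ K, ∀ p, t p = p + pt 0 (2 * a) 0)
    (hz : ∃ t ∈ K, ∀ p, t p = p + pt 0 0 (2 * a)) :
    bccLattice a ⊆ {y | ∃ g ∈ K, g 0 = y} := by
  rintro y ⟨m1, m2, m3, h1, h2, h3, h12, h23⟩
  obtain ⟨r, k1, k2, k3, hr, rfl, rfl, rfl⟩ : ∃ r k1 k2 k3 : ℤ,
      (r = 0 ∨ r = 1) ∧ m1 = r + 2 * k1 ∧ m2 = -r + 2 * k2 ∧ m3 = r + 2 * k3 := by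
    refine ⟨m1 % 2, m1 / 2, (m2 + m1 % 2) / 2, (m3 - m1 % 2) / 2, ?_⟩
    simp only [Int.ModEq] at h12 h23
    omega
  have hcorner : ∃ g ∈ K, g 0 = pt (a * r) (-(a * r)) (a * r) := by
    rcases hr with rfl | rfl
    · exact ⟨1, K.one_mem, by simp [pt_zero]⟩
    · simpa using hbase
  obtain ⟨tx, htxK, htx⟩ := hx
  obtain ⟨ty, htyK, hty⟩ := hy
  obtain ⟨tz, htzK, htz⟩ := hz
  obtain ⟨g, hg, hgy⟩ := IsometryEquiv.exists_mem_apply_eq_add_zsmul htzK htz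
    (IsometryEquiv.exists_mem_apply_eq_add_zsmul htyK hty
      (IsometryEquiv.exists_mem_apply_eq_add_zsmul htxK htx hcorner k1) k2) k3
  refine ⟨g, hg, hgy.trans ?_⟩
  ext i; fin_cases i <;> simp [h1, h2, h3] <;> ring

theorem vertex_set_K2_12_general
    (a : ℝ)
    (R0 R1 S : E3 ≃ᵢ E3)
    (hR0 : ∀ x : E3, R0 x = pt (x 1 + a) (x 0 - a) (-(x 2) + a))
    (hR1 : ∀ x : E3, R1 x = pt (x 0) (-(x 1)) (x 2))
    (hS : ∀ x : E3, S x = pt (-(x 1)) (-(x 2)) (x 0)) :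
    {y : E3 | ∃ g ∈ Subgroup.closure {R0, R1, S}, g 0 = y} =
      {y : E3 | ∃ m1 m2 m3 : ℤ,
        y 0 = a * m1 ∧ y 1 = a * m2 ∧ y 2 = a * m3 ∧
        Int.ModEq 2 m1 m2 ∧ Int.ModEq 2 m2 m3} := by
  have e0 : ⇑R0 = genR0 a := funext hR0
  have e1 : ⇑R1 = genR1 := funext hR1
  have eS : ⇑S = genS := funext hS
  have mem0 : R0 ∈ Subgroup.closure {R0, R1, S} := Subgroup.subset_closure (by simp)
  have mem1 : R1 ∈ Subgroup.closure {R0, R1, S} := Subgroup.subset_closure (by simp)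
  have memS : S ∈ Subgroup.closure {R0, R1, S} := Subgroup.subset_closure (by simp)
  apply Subset.antisymm
  · rintro _ ⟨g, hg, rfl⟩
    refine IsometryEquiv.mapsTo_of_mem_closure ?_ ?_ hg (zero_mem_bccLattice a)
    · rintro _ (rfl | rfl | rfl)
      · exact IsometryEquiv.isOfFinOrder_of_iterate_eq_id two_pos (e0 ▸ genR0_iterate_two a)
      · exact IsometryEquiv.isOfFinOrder_of_iterate_eq_id two_pos (e1 ▸ genR1_iterate_two)
      · exact IsometryEquiv.isOfFinOrder_of_iterate_eq_id three_pos (eS ▸ genS_iterate_three)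
    · rintro _ (rfl | rfl | rfl)
      · exact e0 ▸ mapsTo_genR0_bccLattice a
      · exact e1 ▸ mapsTo_genR1_bccLattice a
      · exact eS ▸ mapsTo_genS_bccLattice a
  · refine bccLattice_subset_orbit ⟨R0, mem0, by rw [e0, genR0_zero]⟩
      ⟨R0 * R1 * R0 * S * R1 * S * S, by (repeat' apply mul_mem) <;> assumption, fun p => by
        simp only [IsometryEquiv.mul_apply, e0, e1, eS, genR0_genR1_genR0_genS_genR1_genS_genS]⟩
      ⟨R1 * R0 * S * R1 * R0 * S, by (repeat' apply mul_mem) <;> assumption, fun p => by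
        simp only [IsometryEquiv.mul_apply, e0, e1, eS, genR1_genR0_genS_genR1_genR0_genS]⟩
      ⟨S * R0 * R1 * R0 * S * R1 * S, by (repeat' apply mul_mem) <;> assumption, fun p => by
        simp only [IsometryEquiv.mul_apply, e0, e1, eS, genS_genR0_genR1_genR0_genS_genR1_genS]⟩

theorem vertex_set_K2_12
    (a : ℝ) (ha : a ≠ 0)
    (R0 R1 S : E3 ≃ᵢ E3)
    (hR0 : ∀ x : E3, R0 x = pt (x 1 + a) (x 0 - a) (-(x 2) + a))
    (hR1 : ∀ x : E3, R1 x = pt (x 0) (-(x 1)) (x 2))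
    (hS : ∀ x : E3, S x = pt (-(x 1)) (-(x 2)) (x 0)) :
    {y : E3 | ∃ g ∈ Subgroup.closure {R0, R1, S}, g 0 = y} =
      {y : E3 | ∃ m1 m2 m3 : ℤ,
        y 0 = a * m1 ∧ y 1 = a * m2 ∧ y 2 = a * m3 ∧
        Int.ModEq 2 m1 m2 ∧ Int.ModEq 2 m2 m3} :=
  vertex_set_K2_12_general a R0 R1 S hR0 hR1 hS
end
end
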